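/- Let g(θ) = h(θ) - z(θ) where h(θ) = -θ log₂ θ - (1-θ) log₂(1-θ) and z(θ) = 2√(θ(1-θ)). Then the third derivative g'''(θ) ≤ 0 for θ ∈ (0, 1/2), i.e., g' is concave on (0,1/2); moreover g(0) = g(1/2) = 0 and g(θ) ≤ 0 on [0,1/2]. -/

import Mathlib

/-! With `s = θ(1-θ)` one has `g'' = ((2√s)⁻¹ - (log 2)⁻¹) / s` and
`g''' = (1 - 2θ) / s² · ((log 2)⁻¹ - 3 / (4√s))`; since `√s ≤ 1/2` and `log 2 > 2/3`, the
latter is nonpositive on `(0, 1/2)`. The sign of `g''` changes only where `2√s = log 2`, at a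
point `t`: `g` is convex on `[0, t]` and concave on `[t, 1 - t]`. Concavity and the symmetry
`g (1 - θ) = g θ` give `g θ ≤ g (1/2) = 0` on `[t, 1 - t]`, and convexity then gives
`g θ ≤ max (g 0) (g t) = 0` on `[0, t]`. -/

open Real Set

noncomputable def entropyGap (x : ℝ) : ℝ := binEntropy x / log 2 - 2 * √(x * (1 - x))

noncomputable def entropyGapDeriv (x : ℝ) : ℝ :=
  (log (1 - x) - log x) / log 2 - (1 - 2 * x) / √(x * (1 - x))

noncomputable def entropyGapDeriv2 (x : ℝ) : ℝ :=
  ((2 * √(x * (1 - x)))⁻¹ - (log 2)⁻¹) / (x * (1 - x))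

noncomputable def entropyGapDeriv3 (x : ℝ) : ℝ :=
  (1 - 2 * x) / (x * (1 - x)) ^ 2 * (1 / log 2 - 3 / (4 * √(x * (1 - x))))

lemma entropyGap_eq_logb : entropyGap = fun x =>
    (-x * logb 2 x - (1 - x) * logb 2 (1 - x)) - 2 * √(x * (1 - x)) := by
  funext x
  simp only [entropyGap, binEntropy, logb, log_inv]
  ring

lemma continuous_entropyGap : Continuous entropyGap := by
  unfold entropyGap; fun_prop

lemma entropyGap_one_sub (x : ℝ) : entropyGap (1 - x) = entropyGap x := by
  simp only [entropyGap, binEntropy_one_sub, sub_sub_cancel, mul_comm]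

lemma entropyGap_zero : entropyGap 0 = 0 := by simp [entropyGap]

lemma entropyGap_half : entropyGap (1 / 2) = 0 := by
  have hsqrt : √((1 / 2 : ℝ) * (1 - 1 / 2)) = 1 / 2 := by
    rw [show (1 / 2 : ℝ) * (1 - 1 / 2) = (1 / 2) ^ 2 by norm_num, sqrt_sq (by norm_num)]
  rw [entropyGap, hsqrt, one_div, binEntropy_two_inv, div_self (log_pos one_lt_two).ne']
  norm_num

lemma hasDerivAt_mul_one_sub (x : ℝ) : HasDerivAt (fun y => y * (1 - y)) (1 - 2 * x) x :=
  ((hasDerivAt_id x).mul ((hasDerivAt_id x).const_sub 1)).congr_deriv (by simp; ring)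

lemma mul_one_sub_pos {x : ℝ} (hx : x ∈ Ioo (0 : ℝ) 1) : 0 < x * (1 - x) :=
  mul_pos hx.1 (sub_pos.2 hx.2)

lemma hasDerivAt_sqrt_mul_one_sub {x : ℝ} (hx : x ∈ Ioo (0 : ℝ) 1) :
    HasDerivAt (fun y => √(y * (1 - y))) ((1 - 2 * x) / (2 * √(x * (1 - x)))) x :=
  (hasDerivAt_mul_one_sub x).sqrt (mul_one_sub_pos hx).ne'

lemma hasDerivAt_entropyGap {x : ℝ} (hx : x ∈ Ioo (0 : ℝ) 1) :
    HasDerivAt entropyGap (entropyGapDeriv x) x := by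
  have h := ((hasDerivAt_binEntropy hx.1.ne' hx.2.ne).div_const (log 2)).sub
    ((hasDerivAt_sqrt_mul_one_sub hx).const_mul 2)
  refine h.congr_deriv ?_
  have := (sqrt_pos.2 (mul_one_sub_pos hx)).ne'
  rw [entropyGapDeriv]; field_simp

lemma hasDerivAt_entropyGapDeriv {x : ℝ} (hx : x ∈ Ioo (0 : ℝ) 1) :
    HasDerivAt entropyGapDeriv (entropyGapDeriv2 x) x := by
  have hlog := ((((hasDerivAt_id x).const_sub 1).log (sub_pos.2 hx.2).ne').sub
    ((hasDerivAt_id x).log hx.1.ne')).div_const (log 2)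
  have hquot := (((hasDerivAt_id x).const_mul 2).const_sub 1).div
    (hasDerivAt_sqrt_mul_one_sub hx) (sqrt_pos.2 (mul_one_sub_pos hx)).ne'
  refine (hlog.sub hquot).congr_deriv ?_
  have hs := mul_one_sub_pos hx
  have hr2 := sq_sqrt hs.le
  have := hx.1.ne'
  have := (sub_pos.2 hx.2).ne'
  have := (log_pos one_lt_two).ne'
  simp only [entropyGapDeriv2, id]
  field_simp
  linear_combination (4 * log 2 * x * (1 - x) - log 2) * hr2

lemma hasDerivAt_entropyGapDeriv2 {x : ℝ} (hx : x ∈ Ioo (0 : ℝ) 1) :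
    HasDerivAt entropyGapDeriv2 (entropyGapDeriv3 x) x := by
  have hs := mul_one_sub_pos hx
  have hr2 := sq_sqrt hs.le
  have h := ((((hasDerivAt_sqrt_mul_one_sub hx).const_mul 2).fun_inv (by positivity)).sub_const
    (log 2)⁻¹).div (hasDerivAt_mul_one_sub x) hs.ne'
  refine h.congr_deriv ?_
  have := (log_pos one_lt_two).ne'
  simp only [entropyGapDeriv3, one_div]
  field_simp
  rw [hr2]
  ring

lemma eqOn_deriv_entropyGap : EqOn (deriv entropyGap) entropyGapDeriv (Ioo 0 1) :=
  deriv_eqOn isOpen_Ioo fun _ hx => (hasDerivAt_entropyGap hx).hasDerivWithinAt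

lemma eqOn_deriv_entropyGapDeriv : EqOn (deriv entropyGapDeriv) entropyGapDeriv2 (Ioo 0 1) :=
  deriv_eqOn isOpen_Ioo fun _ hx => (hasDerivAt_entropyGapDeriv hx).hasDerivWithinAt

lemma eqOn_deriv_entropyGapDeriv2 : EqOn (deriv entropyGapDeriv2) entropyGapDeriv3 (Ioo 0 1) :=
  deriv_eqOn isOpen_Ioo fun _ hx => (hasDerivAt_entropyGapDeriv2 hx).hasDerivWithinAt

lemma sqrt_mul_one_sub_le_half (x : ℝ) : √(x * (1 - x)) ≤ 1 / 2 := by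
  rw [sqrt_le_left (by norm_num)]
  nlinarith [sq_nonneg (x - 1 / 2)]

lemma entropyGapDeriv3_nonpos {x : ℝ} (hx : x ∈ Ioo (0 : ℝ) (1 / 2)) :
    entropyGapDeriv3 x ≤ 0 := by
  have hx1 : x ∈ Ioo (0 : ℝ) 1 := ⟨hx.1, by linarith [hx.2]⟩
  have hr := sqrt_pos.2 (mul_one_sub_pos hx1)
  have hfactor : 4 * √(x * (1 - x)) ≤ 3 * log 2 := by
    linarith [sqrt_mul_one_sub_le_half x, log_two_gt_d9]
  refine mul_nonpos_of_nonneg_of_nonpos (div_nonneg (by linarith [hx.2]) (sq_nonneg _)) ?_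
  rw [sub_nonpos, div_le_div_iff₀ (log_pos one_lt_two) (by positivity)]
  linarith

lemma entropyGapDeriv2_nonpos {x : ℝ} (hx : x ∈ Ioo (0 : ℝ) 1)
    (h : (log 2 / 2) ^ 2 ≤ x * (1 - x)) : entropyGapDeriv2 x ≤ 0 := by
  have hlog : log 2 / 2 ≤ √(x * (1 - x)) := le_sqrt_of_sq_le h
  refine div_nonpos_of_nonpos_of_nonneg ?_ (mul_one_sub_pos hx).le
  rw [sub_nonpos]
  exact inv_anti₀ (log_pos one_lt_two) (by linarith)

lemma entropyGapDeriv2_nonneg {x : ℝ} (hx : x ∈ Ioo (0 : ℝ) 1)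
    (h : x * (1 - x) ≤ (log 2 / 2) ^ 2) : 0 ≤ entropyGapDeriv2 x := by
  have hlog : √(x * (1 - x)) ≤ log 2 / 2 :=
    (sqrt_le_left (div_nonneg (log_pos one_lt_two).le zero_le_two)).2 h
  refine div_nonneg ?_ (mul_one_sub_pos hx).le
  rw [sub_nonneg]
  exact inv_anti₀ (by positivity [sqrt_pos.2 (mul_one_sub_pos hx)]) (by linarith)

-- The root in `(0, 1/2)` of `x * (1 - x) = (log 2 / 2) ^ 2`, where `entropyGapDeriv2`
-- changes sign.
noncomputable def entropyGapInflection : ℝ := (1 - √(1 - log 2 ^ 2)) / 2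

lemma entropyGapInflection_mem : entropyGapInflection ∈ Ioo (0 : ℝ) (1 / 2) := by
  have hlog := log_pos one_lt_two
  have hlog1 := log_two_lt_d9
  have hpos : 0 < √(1 - log 2 ^ 2) := sqrt_pos.2 (by nlinarith)
  have hlt : √(1 - log 2 ^ 2) < 1 := (sqrt_lt' one_pos).2 (by nlinarith)
  constructor <;> rw [entropyGapInflection] <;> linarith

lemma entropyGapInflection_mul_one_sub :
    entropyGapInflection * (1 - entropyGapInflection) = (log 2 / 2) ^ 2 := by
  have h := sq_sqrt (show 0 ≤ 1 - log 2 ^ 2 by nlinarith [log_pos one_lt_two, log_two_lt_d9])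
  rw [entropyGapInflection]
  linear_combination (-1 / 4 : ℝ) * h

lemma convexOn_entropyGap : ConvexOn ℝ (Icc 0 entropyGapInflection) entropyGap := by
  obtain ⟨ht0, ht⟩ := entropyGapInflection_mem
  have hmem : ∀ x ∈ Ioo 0 entropyGapInflection, x ∈ Ioo (0 : ℝ) 1 :=
    fun x hx => ⟨hx.1, by linarith [hx.2]⟩
  refine convexOn_of_hasDerivWithinAt2_nonneg (f' := entropyGapDeriv) (f'' := entropyGapDeriv2)
    (convex_Icc _ _) continuous_entropyGap.continuousOn ?_ ?_ ?_ <;> rw [interior_Icc] <;>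
    intro x hx
  · exact (hasDerivAt_entropyGap (hmem x hx)).hasDerivWithinAt
  · exact (hasDerivAt_entropyGapDeriv (hmem x hx)).hasDerivWithinAt
  · refine entropyGapDeriv2_nonneg (hmem x hx) ?_
    rw [← entropyGapInflection_mul_one_sub]
    nlinarith [hx.1, hx.2]

lemma concaveOn_entropyGap :
    ConcaveOn ℝ (Icc entropyGapInflection (1 - entropyGapInflection)) entropyGap := by
  obtain ⟨ht0, ht⟩ := entropyGapInflection_mem
  have hmem : ∀ x ∈ Ioo entropyGapInflection (1 - entropyGapInflection),
      x ∈ Ioo (0 : ℝ) 1 := fun x hx => ⟨by linarith [hx.1], by linarith [hx.2]⟩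
  refine concaveOn_of_hasDerivWithinAt2_nonpos (f' := entropyGapDeriv) (f'' := entropyGapDeriv2)
    (convex_Icc _ _) continuous_entropyGap.continuousOn ?_ ?_ ?_ <;> rw [interior_Icc] <;>
    intro x hx
  · exact (hasDerivAt_entropyGap (hmem x hx)).hasDerivWithinAt
  · exact (hasDerivAt_entropyGapDeriv (hmem x hx)).hasDerivWithinAt
  · refine entropyGapDeriv2_nonpos (hmem x hx) ?_
    rw [← entropyGapInflection_mul_one_sub]
    nlinarith [hx.1, hx.2]

lemma entropyGap_nonpos_of_mem_Icc_inflection {x : ℝ}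
    (hx : x ∈ Icc entropyGapInflection (1 - entropyGapInflection)) : entropyGap x ≤ 0 := by
  have hx' : 1 - x ∈ Icc entropyGapInflection (1 - entropyGapInflection) :=
    ⟨by linarith [hx.2], by linarith [hx.1]⟩
  have h := concaveOn_entropyGap.2 hx hx' (by norm_num : (0 : ℝ) ≤ 1 / 2)
    (by norm_num : (0 : ℝ) ≤ 1 / 2) (by norm_num)
  simp only [smul_eq_mul] at h
  rw [entropyGap_one_sub, show 1 / 2 * x + 1 / 2 * (1 - x) = 1 / 2 by ring, entropyGap_half] at h
  linarith

lemma entropyGap_nonpos {x : ℝ} (hx : x ∈ Icc (0 : ℝ) (1 / 2)) : entropyGap x ≤ 0 := by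
  obtain ⟨ht0, ht⟩ := entropyGapInflection_mem
  rcases le_or_gt x entropyGapInflection with hxt | htx
  · have hgt : entropyGap entropyGapInflection ≤ 0 :=
      entropyGap_nonpos_of_mem_Icc_inflection ⟨le_rfl, by linarith⟩
    have h := convexOn_entropyGap.le_max_of_mem_Icc (left_mem_Icc.2 ht0.le)
      (right_mem_Icc.2 ht0.le) ⟨hx.1, hxt⟩
    rw [entropyGap_zero] at h
    exact h.trans (max_le le_rfl hgt)
  · exact entropyGap_nonpos_of_mem_Icc_inflection ⟨htx.le, by linarith [hx.2]⟩

lemma concaveOn_entropyGapDeriv : ConcaveOn ℝ (Ioo 0 (1 / 2)) entropyGapDeriv := by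
  have hmem : ∀ x ∈ Ioo (0 : ℝ) (1 / 2), x ∈ Ioo (0 : ℝ) 1 :=
    fun x hx => ⟨hx.1, by linarith [hx.2]⟩
  refine concaveOn_of_hasDerivWithinAt2_nonpos (f' := entropyGapDeriv2) (f'' := entropyGapDeriv3)
    (convex_Ioo _ _)
    (fun x hx => (hasDerivAt_entropyGapDeriv (hmem x hx)).continuousAt.continuousWithinAt)
    ?_ ?_ ?_ <;> rw [interior_Ioo] <;> intro x hx
  · exact (hasDerivAt_entropyGapDeriv (hmem x hx)).hasDerivWithinAt
  · exact (hasDerivAt_entropyGapDeriv2 (hmem x hx)).hasDerivWithinAt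
  · exact entropyGapDeriv3_nonpos hx

theorem g_third_deriv_nonpos_and_g_nonpos
    (g : ℝ → ℝ)
    (hg : g = fun θ =>
      (-θ * Real.logb 2 θ - (1 - θ) * Real.logb 2 (1 - θ)) -
        2 * Real.sqrt (θ * (1 - θ))) :
    (∀ θ ∈ Set.Ioo (0:ℝ) (1/2), deriv (deriv (deriv g)) θ ≤ 0) ∧
    ConcaveOn ℝ (Set.Ioo (0:ℝ) (1/2)) (deriv g) ∧
    g 0 = 0 ∧ g (1/2) = 0 ∧
    ∀ θ ∈ Set.Icc (0:ℝ) (1/2), g θ ≤ 0 := by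
  obtain rfl : g = entropyGap := hg.trans entropyGap_eq_logb.symm
  have hsub : Ioo (0 : ℝ) (1 / 2) ⊆ Ioo 0 1 := Ioo_subset_Ioo_right (by norm_num)
  have hderiv3 : EqOn (deriv (deriv (deriv entropyGap))) entropyGapDeriv3 (Ioo 0 1) :=
    ((((eqOn_deriv_entropyGap.deriv isOpen_Ioo).trans eqOn_deriv_entropyGapDeriv).deriv
      isOpen_Ioo).trans eqOn_deriv_entropyGapDeriv2)
  refine ⟨fun x hx => ?_, concaveOn_entropyGapDeriv.congr (eqOn_deriv_entropyGap.mono hsub).symm,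
    entropyGap_zero, entropyGap_half, fun x hx => entropyGap_nonpos hx⟩
  rw [hderiv3 (hsub hx)]
  exact entropyGapDeriv3_nonpos hx
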